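/- Let F be a field of prime characteristic p, A_n = F[x₁,...,x_n]/(x₁^p,...,x_n^p), W_n = Der(A_n), and 𝒟_i = D_i + Σ_{j=i}^{n-1}(Π_{k=i}^{j} x_k^{p-1}) D_{j+1}. Then 𝒟_i = (−1)^{i−1} 𝒟₁^{p^{i−1}} (the p^{i−1}-st power as a linear operator on A_n) for 1 ≤ i ≤ n. -/

import Mathlib

open MvPolynomial

set_option synthInstance.maxHeartbeats 400000
set_option maxHeartbeats 1000000

noncomputable section

def truncIdeal (F : Type*) [Field F] (p n : ℕ) : Ideal (MvPolynomial (Fin n) F) :=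
  Ideal.span (Set.range fun i => (X i : MvPolynomial (Fin n) F) ^ p)

abbrev TP (F : Type*) [Field F] (p n : ℕ) :=
  MvPolynomial (Fin n) F ⧸ truncIdeal F p n

abbrev Wn (F : Type*) [Field F] (p n : ℕ) := Derivation F (TP F p n) (TP F p n)

def xv (F : Type*) [Field F] (p n : ℕ) (i : Fin n) : TP F p n :=
  Ideal.Quotient.mk _ (X i)

def xm (F : Type*) [Field F] (p n : ℕ) (α : Fin n → ℕ) : TP F p n :=
  Ideal.Quotient.mk _ (∏ j, X j ^ α j)

/-- `D` is the family of coordinate partial derivatives `D₁, …, D_n` of `A_n`. -/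
def IsCoordDer (F : Type*) [Field F] (p n : ℕ) (D : Fin n → Wn F p n) : Prop :=
  ∀ i j : Fin n, D i (xv F p n j) = if i = j then 1 else 0

def scrD (F : Type*) [Field F] (p n : ℕ) (D : Fin n → Wn F p n) (i : Fin n) :
    Wn F p n :=
  ∑ j : Fin n, if i ≤ j then
    (∏ k : Fin n, if i ≤ k ∧ k < j then xv F p n k ^ (p - 1) else 1) • D j
  else 0

def gradeW (F : Type*) [Field F] (p n : ℕ) (D : Fin n → Wn F p n) (m : ℕ) :
    Submodule F (Wn F p n) :=
  Submodule.span F {w | ∃ (α : Fin n → ℕ) (j : Fin n),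
    (∀ l, α l ≤ p - 1) ∧ (∑ l, α l) = m ∧ w = xm F p n α • D j}

def gradeWZ (F : Type*) [Field F] (p n : ℕ) (D : Fin n → Wn F p n) (k : ℤ) :
    Submodule F (Wn F p n) :=
  Submodule.span F {w | ∃ (α : Fin n → ℕ) (j : Fin n),
    (∀ l, α l ≤ p - 1) ∧ ((∑ l, α l : ℕ) : ℤ) = k + 1 ∧ w = xm F p n α • D j}

def IsRegularVec (F : Type*) [Field F] (p n : ℕ) (lam : Fin n → F) : Prop :=
  ∀ μ : Fin n → ZMod p, (∑ i, ((μ i).val : F) * lam i) = 0 → μ = 0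

end

/-!
In characteristic `p` the `p`-th power of a derivation is again a derivation, so `𝒟ᵢ^p` is
determined by its values on the generators `x_j`. Since `𝒟ᵢ = Dᵢ + x_i^{p-1} 𝒟_{i+1}`, we have
`𝒟ᵢ x_i = 1`, `𝒟ᵢ x_j = x_i^{p-1} 𝒟_{i+1} x_j`, and `x_i 𝒟ᵢ g = 0` for `g = 𝒟_{i+1} x_j`; for such
`g`, `𝒟ᵢ^m (x_i^m g) = m! g`. Hence `𝒟ᵢ^p x_j = (p-1)! 𝒟_{i+1} x_j = -𝒟_{i+1} x_j` by Wilson's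
theorem, i.e. `𝒟ᵢ^p = -𝒟_{i+1}`, and the claim follows by iterating.
-/

namespace Derivation

variable {R A : Type*} [CommRing R] [CommRing A] [Algebra R A]

theorem commutator_pow_mulLeft (D : Derivation R A A) (k : ℕ) (a : A) :
    ((LinearMap.mulLeft R D.toLinearMap - LinearMap.mulRight R D.toLinearMap :
        Module.End R (Module.End R A)) ^ k) (LinearMap.mulLeft R a) =
      LinearMap.mulLeft R ((D.toLinearMap ^ k) a) := by
  induction k with
  | zero => rfl
  | succ k ih =>
    ext b
    rw [pow_succ', Module.End.mul_apply, ih]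
    simp [leibniz, pow_succ', mul_comm]

theorem pow_char_apply_mul (p : ℕ) (hp : p.Prime) [CharP R p] (D : Derivation R A A) (a b : A) :
    (D.toLinearMap ^ p) (a * b) = a • (D.toLinearMap ^ p) b + b • (D.toLinearMap ^ p) a := by
  set ad : Module.End R (Module.End R A) :=
    LinearMap.mulLeft R D.toLinearMap - LinearMap.mulRight R D.toLinearMap with had
  have hcomm : Commute ad (LinearMap.mulRight R D.toLinearMap) :=
    Commute.sub_left (R := Module.End R (Module.End R A)) (LinearMap.commute_mulLeft_right _ _)
      (Commute.refl _)
  have hsplit : ad + LinearMap.mulRight R D.toLinearMap = LinearMap.mulLeft R D.toLinearMap := by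
    ext; simp [had]
  have hp0 : (p : Module.End R (Module.End R A)) = 0 := by
    rw [← _root_.map_natCast (algebraMap R _), CharP.cast_eq_zero, map_zero]
  -- Jacobson: `L_{δ^p} = (ad δ + R_δ)^p = (ad δ)^p + R_{δ^p}`, and `(ad δ)^p L_a = L_{δ^p a}`.
  obtain ⟨r, hr⟩ := hcomm.exists_add_pow_prime_eq hp
  rw [hsplit, LinearMap.pow_mulLeft, LinearMap.pow_mulRight, hp0, zero_mul, zero_mul, zero_mul,
    add_zero] at hr
  simpa [had, commutator_pow_mulLeft, add_comm, mul_comm] using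
    congr($hr (LinearMap.mulLeft R a) b)

def powChar (p : ℕ) (hp : p.Prime) [CharP R p] (D : Derivation R A A) : Derivation R A A :=
  mk' (D.toLinearMap ^ p) (pow_char_apply_mul p hp D)

theorem pow_apply_one {D : Derivation R A A} {k : ℕ} (hk : k ≠ 0) :
    (D.toLinearMap ^ k) 1 = 0 := by
  obtain ⟨k, rfl⟩ := Nat.exists_eq_succ_of_ne_zero hk
  rw [pow_succ, Module.End.mul_apply]
  exact (congrArg _ D.map_one_eq_zero).trans (map_zero _)

theorem pow_apply_pow_mul {D : Derivation R A A} {x g : A} (hx : D x = 1) (hg : x * D g = 0)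
    (m : ℕ) : (D.toLinearMap ^ m) (x ^ m * g) = m.factorial • g := by
  induction m with
  | zero => simp
  | succ m ih =>
    have hstep : D (x ^ (m + 1) * g) = (m + 1) • (x ^ m * g) := by
      have hxg : x ^ (m + 1) * D g = 0 := by rw [pow_succ, mul_assoc, hg, mul_zero]
      rw [leibniz, smul_eq_mul, hxg, zero_add, leibniz_pow, hx, Nat.add_sub_cancel]
      simp only [smul_eq_mul, mul_one, nsmul_eq_mul]
      ring
    rw [pow_succ, Module.End.mul_apply, coeFn_coe, hstep, map_nsmul, ih, smul_smul,
      Nat.factorial_succ]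

end Derivation

theorem Nat.Prime.cast_factorial_pred (R : Type*) [Ring R] {p : ℕ} (hp : p.Prime) [CharP R p] :
    ((p - 1).factorial : R) = -1 := by
  have := Fact.mk hp
  have h := congrArg (ZMod.castHom (dvd_refl p) R) (ZMod.wilsons_lemma (p := p))
  rwa [map_natCast, map_neg, map_one] at h

section TruncatedPolynomial

variable {F : Type*} [Field F] {p n : ℕ}

theorem xv_pow_eq_zero (i : Fin n) : xv F p n i ^ p = 0 := by
  rw [xv, ← map_pow, Ideal.Quotient.eq_zero_iff_mem]
  exact Ideal.subset_span ⟨i, rfl⟩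

theorem adjoin_range_xv : Algebra.adjoin F (Set.range (xv F p n)) = ⊤ := by
  rw [show Set.range (xv F p n) = Ideal.Quotient.mkₐ F _ '' Set.range X from
      Set.range_comp _ _, ← AlgHom.map_adjoin, adjoin_range_X, Algebra.map_top,
    AlgHom.range_eq_top]
  exact Ideal.Quotient.mkₐ_surjective F _

variable {D : Fin n → Wn F p n}

theorem IsCoordDer.apply_prod_xv_pow_eq_zero (hD : IsCoordDer F p n D) {i : Fin n}
    {s : Finset (Fin n)} (hi : i ∉ s) (e : Fin n → ℕ) : D i (∏ k ∈ s, xv F p n k ^ e k) = 0 := by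
  refine Finset.prod_induction _ (fun y => D i y = 0) (fun a b ha hb => ?_)
    (D i).map_one_eq_zero (fun k hk => ?_)
  · simp [Derivation.leibniz, ha, hb]
  · rw [Derivation.leibniz_pow, hD, if_neg (ne_of_mem_of_not_mem hk hi).symm, smul_zero,
      smul_zero]

theorem scrD_apply_xv (hD : IsCoordDer F p n D) (i j : Fin n) :
    scrD F p n D i (xv F p n j) =
      if i ≤ j then ∏ k ∈ Finset.Ico i j, xv F p n k ^ (p - 1) else 0 := by
  have hIco : (∏ k, if i ≤ k ∧ k < j then xv F p n k ^ (p - 1) else 1) =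
      ∏ k ∈ Finset.Ico i j, xv F p n k ^ (p - 1) := by
    rw [← Finset.prod_filter]
    congr 1
    ext k
    simp
  simp only [scrD, ← Derivation.coeFnAddMonoidHom_apply, map_sum, Finset.sum_apply]
  rw [Finset.sum_eq_single j (fun k _ hkj => ?_) (by simp), hIco]
  · split_ifs <;> simp [hD j j]
  · split_ifs <;> simp [hD k j, hkj]

theorem IsCoordDer.apply_scrD_apply_xv_of_lt (hD : IsCoordDer F p n D) {k i : Fin n}
    (hki : k < i) (j : Fin n) : D k (scrD F p n D i (xv F p n j)) = 0 := by
  rw [scrD_apply_xv hD]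
  split_ifs
  · exact hD.apply_prod_xv_pow_eq_zero (by simp [hki.not_ge]) _
  · exact map_zero _

theorem scrD_eq_add_smul_scrD_succ (hD : IsCoordDer F p n D) (i : Fin n) (hi : i.val + 1 < n) :
    scrD F p n D i = D i + xv F p n i ^ (p - 1) • scrD F p n D ⟨i + 1, hi⟩ := by
  refine Derivation.ext_of_adjoin_eq_top _ adjoin_range_xv ?_
  rintro _ ⟨j, rfl⟩
  simp only [Derivation.add_apply, Derivation.smul_apply, smul_eq_mul, scrD_apply_xv hD, hD i j]
  rcases lt_trichotomy i j with hij | rfl | hji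
  · have hIco : Finset.Ico i j = insert i (Finset.Ico ⟨i + 1, hi⟩ j) := by
      ext k
      simp only [Finset.mem_Ico, Finset.mem_insert, Fin.ext_iff, Fin.le_def, Fin.lt_def]
      omega
    have hi'j : (⟨i + 1, hi⟩ : Fin n) ≤ j := hij
    rw [if_pos hij.le, if_pos hi'j, if_neg hij.ne, zero_add, hIco,
      Finset.prod_insert (by simp [Fin.le_def])]
  · simp [Fin.le_def]
  · have hji' : ¬(⟨i + 1, hi⟩ : Fin n) ≤ j := fun h => (lt_asymm hji h).elim
    rw [if_neg hji.not_ge, if_neg hji', if_neg hji.ne', mul_zero, add_zero]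

theorem scrD_pow_char (hp : p.Prime) [CharP F p] (hD : IsCoordDer F p n D) (i : Fin n)
    (hi : i.val + 1 < n) :
    (scrD F p n D i).toLinearMap ^ p = -(scrD F p n D ⟨i + 1, hi⟩).toLinearMap := by
  set d := scrD F p n D i with hd_def
  set e := scrD F p n D ⟨i + 1, hi⟩
  have hd : ∀ y, d y = D i y + xv F p n i ^ (p - 1) * e y := fun y => by
    rw [hd_def, scrD_eq_add_smul_scrD_succ hD i hi]; rfl
  have hdx : d (xv F p n i) = 1 := by simp [d, scrD_apply_xv hD]
  suffices Derivation.powChar p hp d = -e from congrArg Derivation.toLinearMap this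
  refine Derivation.ext_of_adjoin_eq_top _ adjoin_range_xv ?_
  rintro _ ⟨j, rfl⟩
  have hp1 : p - 1 ≠ 0 := by have := hp.two_le; omega
  have hconst : (d.toLinearMap ^ (p - 1)) (D i (xv F p n j)) = 0 := by
    rw [hD]; split_ifs
    · exact Derivation.pow_apply_one hp1
    · exact map_zero _
  have hxde : xv F p n i * d (e (xv F p n j)) = 0 := by
    rw [hd, hD.apply_scrD_apply_xv_of_lt (Fin.lt_def.mpr (Nat.lt_succ_self _)), zero_add,
      ← mul_assoc, ← pow_succ', Nat.sub_add_cancel hp.one_le, xv_pow_eq_zero, zero_mul]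
  calc (d.toLinearMap ^ p) (xv F p n j)
      = (d.toLinearMap ^ (p - 1)) (d (xv F p n j)) := by
        rw [← pow_sub_one_mul hp.ne_zero, Module.End.mul_apply]; rfl
    _ = ((p - 1).factorial : F) • e (xv F p n j) := by
        rw [hd, map_add, hconst, zero_add, Derivation.pow_apply_pow_mul hdx hxde,
          Nat.cast_smul_eq_nsmul]
    _ = -e (xv F p n j) := by rw [hp.cast_factorial_pred F, neg_one_smul]

theorem scrD_zero_pow_prime_pow (hp : p.Prime) [CharP F p] (hD : IsCoordDer F p n D) (k : ℕ)
    (hk : k < n) :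
    (scrD F p n D ⟨0, by omega⟩).toLinearMap ^ p ^ k =
      (-1 : F) ^ k • (scrD F p n D ⟨k, hk⟩).toLinearMap := by
  induction k with
  | zero => simp
  | succ k ih =>
    have := Fact.mk hp
    rw [pow_succ, pow_mul, ih (by omega), smul_pow, scrD_pow_char hp hD ⟨k, by omega⟩ hk,
      ← pow_mul, mul_comm k p, pow_mul, neg_one_pow_char, pow_succ, mul_neg_one, smul_neg,
      ← neg_smul]

end TruncatedPolynomial

/-- The paper's index `i` is `i.val + 1` here. -/
theorem scrD_eq_pow_scrD_one (F : Type*) [Field F] (p n : ℕ) (hp : p.Prime)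
    [CharP F p] (D : Fin n → Wn F p n) (hD : IsCoordDer F p n D) :
    ∀ i : Fin n,
      (scrD F p n D i).toLinearMap =
        ((-1 : F) ^ i.val) •
          ((scrD F p n D ⟨0, i.pos⟩).toLinearMap ^ (p ^ i.val)) := by
  intro i
  rw [scrD_zero_pow_prime_pow hp hD i i.isLt, smul_smul, ← mul_pow, neg_one_mul, neg_neg, one_pow,
    one_smul]
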